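/- Cantor's bijection f = (f_1, f_2) is a homeomorphism from I onto I², where I carries the Euclidean topology and I² the product topology. -/

import Mathlib

open Filter Finset MeasureTheory

/-- `qden a n` is the denominator `q_n` of the continued fraction with partial
quotients `a_1 = a 0, a_2 = a 1, …` (0-indexed sequence `a`), defined by
`q_0 = 1`, `q_1 = a_1`, `q_n = a_n q_{n-1} + q_{n-2}`. -/
def qden (a : ℕ → ℕ+) : ℕ → ℕ
  | 0 => 1
  | 1 => a 0
  | (n+2) => (a (n+1) : ℕ) * qden a (n+1) + qden a n

/-- `pnum a n` is the numerator `p_n`, defined by `p_0 = 0`, `p_1 = 1`,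
`p_n = a_n p_{n-1} + p_{n-2}`. -/
def pnum (a : ℕ → ℕ+) : ℕ → ℕ
  | 0 => 0
  | 1 => 1
  | (n+2) => (a (n+1) : ℕ) * pnum a (n+1) + pnum a n

/-- The value `[a_1, a_2, …]` of the infinite continued fraction with partial quotients
`a_1 = a 0, a_2 = a 1, …`, i.e. the limit of the convergents `p_n / q_n` (which always
exists). -/
noncomputable def cfVal (a : ℕ → ℕ+) : ℝ :=
  limUnder atTop (fun n => (pnum a n : ℝ) / (qden a n : ℝ))

/-- The set `I` of irrational numbers of `[0,1]`. -/
def Iirr : Set ℝ := {x | x ∈ Set.Icc (0:ℝ) 1 ∧ Irrational x}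

/-- The (unique) sequence of partial quotients of `x`, when `x` has a continued
fraction expansion. -/
noncomputable def coeff (x : ℝ) : ℕ → ℕ+ := by
  classical
  exact if h : ∃ a : ℕ → ℕ+, cfVal a = x then h.choose else fun _ => 1

/-- First component of Cantor's bijection: `f₁([a_1,a_2,…]) = [a_1,a_3,a_5,…]`. -/
noncomputable def cantorF1 (x : ℝ) : ℝ := cfVal (fun j => coeff x (2*j))

/-- Second component of Cantor's bijection: `f₂([a_1,a_2,…]) = [a_2,a_4,a_6,…]`. -/
noncomputable def cantorF2 (x : ℝ) : ℝ := cfVal (fun j => coeff x (2*j+1))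

/-! The continued fraction expansion `a ↦ [a₁, a₂, …]` is a homeomorphism from `ℕ+^ℕ` (product of
discrete topologies) onto `I`. The value is continuous in the digits because `a₁, …, aₙ₊₁` confine
it to an interval of length `1/(qₙ qₙ₊₁)`, the endpoints being consecutive convergents, i.e.
consecutive partial sums of an alternating series. Conversely the digits of `x` are `⌊1/y⌋` along
the orbit `y = x, G x, G² x, …` of the Gauss map `G y = {1/y}`, which is continuous on `I`, while
`⌊1/y⌋` is locally constant there. Through this identification Cantor's bijection becomes the
splitting of a sequence into its odd- and even-indexed terms, a homeomorphism
`ℕ+^ℕ ≃ₜ ℕ+^ℕ × ℕ+^ℕ`. -/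

open Topology

section Convergents

variable (a : ℕ → ℕ+)

theorem qden_pos (n : ℕ) : 0 < qden a n := by
  induction n using Nat.twoStepInduction with
  | zero => simp [qden]
  | one => simp [qden]
  | more n _ _ => simp only [qden]; positivity

theorem qden_le_qden_succ (n : ℕ) : qden a n ≤ qden a (n + 1) := by
  cases n with
  | zero => exact (a 0).pos
  | succ n => exact le_add_of_le_of_nonneg (Nat.le_mul_of_pos_left _ (a _).pos) (Nat.zero_le _)

theorem qden_mono : Monotone (qden a) := monotone_nat_of_le_succ (qden_le_qden_succ a)

theorem le_qden (n : ℕ) : n ≤ qden a n := by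
  induction n using Nat.twoStepInduction with
  | zero => exact Nat.zero_le _
  | one => exact (a 0).pos
  | more n _ ih =>
    have := qden_pos a n
    have : qden a (n + 1) ≤ a (n + 1) * qden a (n + 1) := Nat.le_mul_of_pos_left _ (a _).pos
    simp only [qden]
    omega

theorem tendsto_qden_atTop : Tendsto (fun n ↦ (qden a n : ℝ)) atTop atTop :=
  tendsto_natCast_atTop_atTop.comp (tendsto_atTop_mono (le_qden a) tendsto_id)

theorem pnum_qden_determinant (n : ℕ) :
    (pnum a (n + 1) * qden a n - pnum a n * qden a (n + 1) : ℤ) = (-1) ^ n := by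
  induction n with
  | zero => simp [pnum, qden]
  | succ n ih =>
    simp only [pnum, qden] at *
    push_cast at *
    linear_combination -ih

noncomputable def convergent (n : ℕ) : ℝ := pnum a n / qden a n

theorem convergent_succ_sub (n : ℕ) :
    convergent a (n + 1) - convergent a n = (-1) ^ n * ((qden a n : ℝ) * qden a (n + 1))⁻¹ := by
  have hq : (0 : ℝ) < qden a n := by exact_mod_cast qden_pos a n
  have hq' : (0 : ℝ) < qden a (n + 1) := by exact_mod_cast qden_pos a (n + 1)
  have hdet : (pnum a (n + 1) * qden a n - pnum a n * qden a (n + 1) : ℝ) = (-1) ^ n := by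
    exact_mod_cast pnum_qden_determinant a n
  rw [convergent, convergent]
  field_simp
  linear_combination hdet

theorem convergent_eq_sum (n : ℕ) :
    convergent a n = ∑ i ∈ Finset.range n, (-1) ^ i * ((qden a i : ℝ) * qden a (i + 1))⁻¹ := by
  induction n with
  | zero => simp [convergent, pnum]
  | succ n ih => rw [Finset.sum_range_succ, ← ih, ← convergent_succ_sub, add_sub_cancel]

theorem antitone_inv_qden_mul_qden_succ :
    Antitone fun n ↦ ((qden a n : ℝ) * qden a (n + 1))⁻¹ := fun m n hmn ↦ by
  have hq : (0 : ℝ) < qden a m * qden a (m + 1) := by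
    exact_mod_cast Nat.mul_pos (qden_pos a m) (qden_pos a (m + 1))
  refine inv_anti₀ hq ?_
  gcongr <;> exact_mod_cast qden_mono a (by omega)

theorem tendsto_inv_qden_mul_qden_succ :
    Tendsto (fun n ↦ ((qden a n : ℝ) * qden a (n + 1))⁻¹) atTop (𝓝 0) :=
  tendsto_inv_atTop_zero.comp <|
    (tendsto_qden_atTop a).atTop_mul_atTop₀ ((tendsto_qden_atTop a).comp (tendsto_add_atTop_nat 1))

theorem tendsto_convergent : Tendsto (convergent a) atTop (𝓝 (cfVal a)) := by
  obtain ⟨l, hl⟩ := (antitone_inv_qden_mul_qden_succ a).tendsto_alternating_series_of_tendsto_zero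
    (tendsto_inv_qden_mul_qden_succ a)
  rw [← funext (convergent_eq_sum a)] at hl
  exact hl.cauchySeq.tendsto_limUnder

end Convergents

noncomputable def gaussMap (x : ℝ) : ℝ := Int.fract x⁻¹

section ContinuedFractionValue

variable (a : ℕ → ℕ+)

theorem cfVal_mem_uIcc (n : ℕ) : cfVal a ∈ Set.uIcc (convergent a n) (convergent a (n + 1)) := by
  have hl := tendsto_convergent a
  have hf := antitone_inv_qden_mul_qden_succ a
  rw [funext (convergent_eq_sum a)] at hl
  simp only [convergent_eq_sum]
  obtain ⟨k, rfl | rfl⟩ := Nat.even_or_odd' n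
  · exact Set.mem_uIcc.2 <| .inl
      ⟨hf.alternating_series_le_tendsto hl k, hf.tendsto_le_alternating_series hl k⟩
  · exact Set.mem_uIcc.2 <| .inr
      ⟨hf.alternating_series_le_tendsto hl (k + 1), hf.tendsto_le_alternating_series hl k⟩

theorem dist_convergent_succ (n : ℕ) :
    dist (convergent a n) (convergent a (n + 1)) = ((qden a n : ℝ) * qden a (n + 1))⁻¹ := by
  have hq : (0 : ℝ) < qden a n * qden a (n + 1) := by
    exact_mod_cast Nat.mul_pos (qden_pos a n) (qden_pos a (n + 1))
  rw [dist_comm, Real.dist_eq, convergent_succ_sub, abs_mul, abs_neg_one_pow, one_mul,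
    abs_of_pos (inv_pos.2 hq)]

variable {a}

theorem pnum_congr {b : ℕ → ℕ+} {n : ℕ} (h : ∀ i < n, a i = b i) : pnum a n = pnum b n := by
  induction n using Nat.twoStepInduction with
  | zero => rfl
  | one => rfl
  | more n ih ih' =>
    simp only [pnum, h (n + 1) (by omega), ih fun i hi ↦ h i (by omega),
      ih' fun i hi ↦ h i (by omega)]

theorem qden_congr {b : ℕ → ℕ+} {n : ℕ} (h : ∀ i < n, a i = b i) : qden a n = qden b n := by
  induction n using Nat.twoStepInduction with
  | zero => rfl
  | one => simp [qden, h 0 one_pos]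
  | more n ih ih' =>
    simp only [qden, h (n + 1) (by omega), ih fun i hi ↦ h i (by omega),
      ih' fun i hi ↦ h i (by omega)]

theorem convergent_congr {b : ℕ → ℕ+} {n : ℕ} (h : ∀ i < n, a i = b i) :
    convergent a n = convergent b n := by
  rw [convergent, convergent, pnum_congr h, qden_congr h]

theorem continuous_cfVal : Continuous cfVal := by
  refine continuous_iff_continuousAt.2 fun a ↦ Metric.tendsto_nhds.2 fun ε hε ↦ ?_
  obtain ⟨N, hN⟩ := ((tendsto_inv_qden_mul_qden_succ a).eventually (gt_mem_nhds hε)).exists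
  have hagree : ∀ᶠ b in 𝓝 a, ∀ i < N + 1, b i = a i := by
    refine (Set.finite_Iio (N + 1)).eventually_all.2 fun i _ ↦ ?_
    exact tendsto_pure.1 (by simpa only [nhds_discrete] using (continuous_apply i).tendsto a)
  filter_upwards [hagree] with b hb
  have hb' : cfVal b ∈ Set.uIcc (convergent a N) (convergent a (N + 1)) := by
    rw [← convergent_congr fun i hi ↦ hb i (by omega), ← convergent_congr hb]
    exact cfVal_mem_uIcc b N
  calc dist (cfVal b) (cfVal a) ≤ dist (convergent a N) (convergent a (N + 1)) :=
        Real.dist_le_of_mem_uIcc hb' (cfVal_mem_uIcc a N)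
    _ < ε := by rwa [dist_convergent_succ]

variable (a)

theorem pnum_succ (n : ℕ) : pnum a (n + 1) = qden (fun i ↦ a (i + 1)) n := by
  induction n using Nat.twoStepInduction with
  | zero => rfl
  | one => simp [pnum, qden]
  | more n ih ih' =>
    show (a (n + 2) : ℕ) * pnum a (n + 2) + pnum a (n + 1)
      = a (n + 2) * qden (fun i ↦ a (i + 1)) (n + 1) + qden (fun i ↦ a (i + 1)) n
    rw [ih, ih']

theorem qden_succ (n : ℕ) :
    qden a (n + 1) = a 0 * qden (fun i ↦ a (i + 1)) n + pnum (fun i ↦ a (i + 1)) n := by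
  induction n using Nat.twoStepInduction with
  | zero => simp [pnum, qden]
  | one => simp [pnum, qden]; ring
  | more n ih ih' =>
    show (a (n + 2) : ℕ) * qden a (n + 2) + qden a (n + 1)
      = a 0 * (a (n + 2) * qden (fun i ↦ a (i + 1)) (n + 1) + qden (fun i ↦ a (i + 1)) n)
        + (a (n + 2) * pnum (fun i ↦ a (i + 1)) (n + 1) + pnum (fun i ↦ a (i + 1)) n)
    rw [ih, ih']
    ring

theorem convergent_succ (n : ℕ) :
    convergent a (n + 1) = (a 0 + convergent (fun i ↦ a (i + 1)) n)⁻¹ := by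
  have hq : (0 : ℝ) < qden (fun i ↦ a (i + 1)) n := by exact_mod_cast qden_pos _ n
  rw [convergent, convergent, pnum_succ, qden_succ, add_div' _ _ _ hq.ne', inv_div]
  push_cast
  ring

theorem cfVal_mem_Icc : cfVal a ∈ Set.Icc 0 1 := by
  have h := cfVal_mem_uIcc a 0
  have ha : (1 : ℝ) ≤ a 0 := by exact_mod_cast (a 0).pos
  simp only [convergent, pnum, qden, Nat.cast_zero, Nat.cast_one, zero_div, one_div] at h
  rw [Set.uIcc_of_le (by positivity)] at h
  exact ⟨h.1, h.2.trans (inv_le_one_of_one_le₀ ha)⟩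

theorem inv_cfVal : (cfVal a)⁻¹ = a 0 + cfVal (fun i ↦ a (i + 1)) := by
  have hpos : (0 : ℝ) < a 0 + cfVal (fun i ↦ a (i + 1)) := by
    have := (cfVal_mem_Icc fun i ↦ a (i + 1)).1
    have : (0 : ℝ) < a 0 := by exact_mod_cast (a 0).pos
    linarith
  have hlim : Tendsto (fun n ↦ convergent a (n + 1)) atTop
      (𝓝 (a 0 + cfVal (fun i ↦ a (i + 1)))⁻¹) := by
    simp only [convergent_succ]
    exact ((tendsto_convergent _).const_add _).inv₀ hpos.ne'
  rw [tendsto_nhds_unique ((tendsto_add_atTop_iff_nat 1).2 (tendsto_convergent a)) hlim, inv_inv]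

theorem cfVal_pos : 0 < cfVal a := by
  rw [← inv_pos, inv_cfVal]
  exact add_pos_of_pos_of_nonneg (by exact_mod_cast (a 0).pos) (cfVal_mem_Icc _).1

theorem cfVal_lt_one : cfVal a < 1 := by
  rw [← inv_inv (cfVal a), inv_cfVal]
  refine inv_lt_one_of_one_lt₀ (lt_add_of_le_of_pos ?_ (cfVal_pos _))
  exact_mod_cast (a 0).pos

theorem floor_inv_cfVal : ⌊(cfVal a)⁻¹⌋ = a 0 := by
  rw [inv_cfVal, Int.floor_natCast_add,
    Int.floor_eq_zero_iff.2 ⟨(cfVal_mem_Icc _).1, cfVal_lt_one _⟩, add_zero]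

theorem gaussMap_cfVal : gaussMap (cfVal a) = cfVal (fun i ↦ a (i + 1)) := by
  rw [gaussMap, inv_cfVal, Int.fract_natCast_add,
    Int.fract_eq_self.2 ⟨(cfVal_mem_Icc _).1, cfVal_lt_one _⟩]

theorem cfVal_injective : Function.Injective cfVal := by
  intro a b hab
  funext n
  induction n generalizing a b with
  | zero => exact_mod_cast (floor_inv_cfVal a).symm.trans (hab ▸ floor_inv_cfVal b)
  | succ n ih =>
    exact @ih (fun i ↦ a (i + 1)) (fun i ↦ b (i + 1))
      (by rw [← gaussMap_cfVal, ← gaussMap_cfVal, hab])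

/-- The Gauss map sends `c / d ∈ (0, 1)` to `(d % c) / c`: this is Euclid's algorithm, so the
denominators cannot decrease forever. -/
theorem cfVal_ne_div (c d : ℕ) : cfVal a ≠ c / d := by
  induction d using Nat.strong_induction_on generalizing a c with
  | _ d ih =>
    intro h
    have hpos := cfVal_pos a
    have hlt := cfVal_lt_one a
    rw [h] at hpos hlt
    obtain ⟨hc, hd⟩ := (div_pos_iff.1 hpos).resolve_right fun h ↦ (Nat.cast_nonneg c).not_gt h.1
    have hcd : c < d := by exact_mod_cast (div_lt_one hd).1 hlt
    refine ih c hcd (fun i ↦ a (i + 1)) (d % c) ?_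
    rw [← gaussMap_cfVal, h, gaussMap, inv_div, Int.fract_div_natCast_eq_div_natCast_mod]

theorem irrational_cfVal : Irrational (cfVal a) := by
  rintro ⟨q, hq⟩
  have hnum : 0 < q.num := Rat.num_pos.2 (by exact_mod_cast hq ▸ cfVal_pos a)
  refine cfVal_ne_div a q.num.toNat q.den ?_
  have hcast : ((q.num.toNat : ℕ) : ℝ) = q.num := by exact_mod_cast Int.toNat_of_nonneg hnum.le
  rw [← hq, Rat.cast_def, hcast]

theorem cfVal_mem_Iirr : cfVal a ∈ Iirr := ⟨cfVal_mem_Icc a, irrational_cfVal a⟩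

end ContinuedFractionValue

theorem mem_Ioo_of_mem_Iirr {x : ℝ} (hx : x ∈ Iirr) : x ∈ Set.Ioo 0 1 :=
  ⟨hx.1.1.lt_of_ne' hx.2.ne_zero, hx.1.2.lt_of_ne hx.2.ne_one⟩

theorem mapsTo_gaussMap : Set.MapsTo gaussMap Iirr Iirr := fun _ hx ↦
  ⟨⟨Int.fract_nonneg _, (Int.fract_lt_one _).le⟩, hx.2.inv.sub_intCast _⟩

theorem continuousOn_gaussMap : ContinuousOn gaussMap Iirr := fun _ hx ↦
  ((continuousAt_fract (hx.2.inv.ne_int _)).comp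
    (continuousAt_inv₀ (mem_Ioo_of_mem_Iirr hx).1.ne')).continuousWithinAt

section ConvergenceOfExpansions

variable {a : ℕ → ℕ+} {ξ : ℕ → ℝ}

theorem mul_qden_sub_pnum_succ (h : ∀ k, ξ k * (a k + ξ (k + 1)) = 1) (n : ℕ) :
    ξ 0 * qden a (n + 1) - pnum a (n + 1) = -ξ (n + 1) * (ξ 0 * qden a n - pnum a n) := by
  induction n with
  | zero =>
    simp only [qden, pnum, Nat.cast_one, Nat.cast_zero]
    linear_combination h 0
  | succ n ih =>
    simp only [qden, pnum]
    push_cast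
    linear_combination (a (n + 1) + ξ (n + 2)) * ih - (ξ 0 * qden a n - pnum a n) * h (n + 1)

theorem tendsto_convergent_of_mul_add_eq_one (hξ : ∀ k, ξ k ∈ Set.Icc 0 1)
    (h : ∀ k, ξ k * (a k + ξ (k + 1)) = 1) : Tendsto (convergent a) atTop (𝓝 (ξ 0)) := by
  have herr : ∀ n, |ξ 0 * qden a n - pnum a n| ≤ 1 := by
    intro n
    induction n with
    | zero => simpa [qden, pnum, abs_of_nonneg (hξ 0).1] using (hξ 0).2
    | succ n ih =>
      rw [mul_qden_sub_pnum_succ h, abs_mul, abs_neg, abs_of_nonneg (hξ _).1]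
      exact mul_le_one₀ (hξ _).2 (abs_nonneg _) ih
  have hdist : ∀ n, dist (convergent a n) (ξ 0) ≤ (qden a n : ℝ)⁻¹ := by
    intro n
    have hq : (0 : ℝ) < qden a n := by exact_mod_cast qden_pos a n
    have hsplit : ξ 0 - pnum a n / qden a n = (ξ 0 * qden a n - pnum a n) * (qden a n : ℝ)⁻¹ := by
      field_simp
    rw [Real.dist_eq, convergent, abs_sub_comm, hsplit, abs_mul, abs_of_pos (inv_pos.2 hq)]
    exact mul_le_of_le_one_left (inv_nonneg.2 hq.le) (herr n)
  exact tendsto_iff_dist_tendsto_zero.2 <| squeeze_zero (fun _ ↦ dist_nonneg) hdist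
    (tendsto_inv_atTop_zero.comp (tendsto_qden_atTop a))

theorem cfVal_eq_of_mul_add_eq_one (hξ : ∀ k, ξ k ∈ Set.Icc 0 1)
    (h : ∀ k, ξ k * (a k + ξ (k + 1)) = 1) : cfVal a = ξ 0 :=
  tendsto_nhds_unique (tendsto_convergent a) (tendsto_convergent_of_mul_add_eq_one hξ h)

end ConvergenceOfExpansions

theorem exists_cfVal_eq {x : ℝ} (hx : x ∈ Iirr) : ∃ a, cfVal a = x := by
  set ξ : ℕ → ℝ := fun k ↦ gaussMap^[k] x
  have hξ : ∀ k, ξ k ∈ Iirr := fun k ↦ mapsTo_gaussMap.iterate k hx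
  have hfloor : ∀ k, 0 < ⌊(ξ k)⁻¹⌋ := fun k ↦ by
    obtain ⟨h0, h1⟩ := mem_Ioo_of_mem_Iirr (hξ k)
    exact Int.floor_pos.2 ((one_le_inv₀ h0).2 h1.le)
  refine ⟨fun k ↦ ⟨⌊(ξ k)⁻¹⌋.toNat, by have := hfloor k; omega⟩,
    cfVal_eq_of_mul_add_eq_one (fun k ↦ (hξ k).1) fun k ↦ ?_⟩
  have hcast : ((⌊(ξ k)⁻¹⌋.toNat : ℕ) : ℝ) = ⌊(ξ k)⁻¹⌋ := by
    exact_mod_cast Int.toNat_of_nonneg (hfloor k).le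
  have hsucc : ξ (k + 1) = Int.fract (ξ k)⁻¹ := Function.iterate_succ_apply' gaussMap k x
  rw [PNat.mk_coe, hcast, hsucc, Int.floor_add_fract,
    mul_inv_cancel₀ (mem_Ioo_of_mem_Iirr (hξ k)).1.ne']

theorem cfVal_coeff {x : ℝ} (hx : x ∈ Iirr) : cfVal (coeff x) = x := by
  have h := exists_cfVal_eq hx
  rw [coeff, dif_pos h]
  exact h.choose_spec

theorem coeff_cfVal (a : ℕ → ℕ+) : coeff (cfVal a) = a :=
  cfVal_injective (cfVal_coeff (cfVal_mem_Iirr a))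

theorem coeff_gaussMap {x : ℝ} (hx : x ∈ Iirr) : coeff (gaussMap x) = fun i ↦ coeff x (i + 1) := by
  rw [← cfVal_coeff hx, gaussMap_cfVal, coeff_cfVal, coeff_cfVal]

theorem coeff_zero {x : ℝ} (hx : x ∈ Iirr) : (coeff x 0 : ℤ) = ⌊x⁻¹⌋ := by
  conv_rhs => rw [← cfVal_coeff hx]
  exact (floor_inv_cfVal _).symm

theorem eventually_floor_eq {X : Type*} [TopologicalSpace X] {g : X → ℝ} {x : X}
    (hg : ContinuousAt g x) (hx : Irrational (g x)) : ∀ᶠ y in 𝓝 x, ⌊g y⌋ = ⌊g x⌋ := by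
  have hmem : g x ∈ Set.Ioo (⌊g x⌋ : ℝ) (⌊g x⌋ + 1) :=
    ⟨(Int.floor_le _).lt_of_ne (hx.ne_int _).symm, Int.lt_floor_add_one _⟩
  filter_upwards [hg.eventually_mem (isOpen_Ioo.mem_nhds hmem)] with y hy
  exact Int.floor_eq_iff.2 ⟨hy.1.le, hy.2⟩

theorem continuous_coeff_apply (n : ℕ) : Continuous fun x : Iirr ↦ coeff x n := by
  induction n with
  | zero =>
    refine ((IsLocallyConstant.iff_eventually_eq _).2 fun x ↦ ?_).continuous
    have hinv : ContinuousAt (fun y : Iirr ↦ (y : ℝ)⁻¹) x :=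
      continuous_subtype_val.continuousAt.inv₀ (mem_Ioo_of_mem_Iirr x.2).1.ne'
    filter_upwards [eventually_floor_eq hinv x.2.2.inv] with y hy
    exact PNat.coe_injective <| by
      exact_mod_cast (coeff_zero y.2).trans (hy.trans (coeff_zero x.2).symm)
  | succ n ih =>
    have h : (fun x : Iirr ↦ coeff x (n + 1))
        = (fun x : Iirr ↦ coeff x n) ∘ mapsTo_gaussMap.restrict gaussMap Iirr Iirr :=
      funext fun x ↦ (congrFun (coeff_gaussMap x.2) n).symm
    rw [h]
    exact ih.comp (continuousOn_gaussMap.mapsToRestrict mapsTo_gaussMap)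

noncomputable def cfValHomeomorph : (ℕ → ℕ+) ≃ₜ Iirr where
  toFun a := ⟨cfVal a, cfVal_mem_Iirr a⟩
  invFun x := coeff x
  left_inv := coeff_cfVal
  right_inv x := Subtype.ext (cfVal_coeff x.2)
  continuous_toFun := continuous_cfVal.subtype_mk _
  continuous_invFun := continuous_pi continuous_coeff_apply

def evenOddHomeomorph (X : Type*) [TopologicalSpace X] : (ℕ → X) ≃ₜ (ℕ → X) × (ℕ → X) :=
  (Homeomorph.piCongrLeft (Y := fun _ ↦ X) Equiv.natSumNatEquivNat).symm.trans
    Homeomorph.sumArrowHomeomorphProdArrow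

theorem evenOddHomeomorph_apply {X : Type*} [TopologicalSpace X] (a : ℕ → X) :
    evenOddHomeomorph X a = (fun j ↦ a (2 * j), fun j ↦ a (2 * j + 1)) := by
  simp [evenOddHomeomorph, Equiv.natSumNatEquivNat_apply, Function.comp_def]

/-- Cantor's bijection `f = (f₁, f₂)` is a homeomorphism from `I` onto `I²`. -/
theorem cantor_bijection_homeomorph :
    ∃ e : {x : ℝ // x ∈ Iirr} ≃ₜ ({x : ℝ // x ∈ Iirr} × {x : ℝ // x ∈ Iirr}),
      ∀ x : {x : ℝ // x ∈ Iirr},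
        ((e x).1 : ℝ) = cantorF1 (x : ℝ) ∧ ((e x).2 : ℝ) = cantorF2 (x : ℝ) := by
  refine ⟨cfValHomeomorph.symm.trans
    ((evenOddHomeomorph ℕ+).trans (cfValHomeomorph.prodCongr cfValHomeomorph)), fun x ↦ ?_⟩
  simp only [Homeomorph.trans_apply, evenOddHomeomorph_apply]
  exact ⟨rfl, rfl⟩
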